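/- arXiv:1108.2403 — 4 statements merged into one kernel-verified Lean document; each statement's English description precedes it below -/
import Mathlib

section
/- Every subgroup of finite index in an invariantly finitely L-presented group is finitely L-presented. -/
/-- The kernel of a finite `L`-presentation: the normal closure in the free group of
`Q ∪ ⋃_{σ ∈ Φ*} σ(R)`, where `Φ*` is the submonoid of `End(F)` generated by `Φ`. -/
def lpresKernel {X : Type} (Q R : Set (FreeGroup X))
    (Φ : Set (Monoid.End (FreeGroup X))) : Subgroup (FreeGroup X) :=
  Subgroup.normalClosure (Q ∪ ⋃ σ ∈ Submonoid.closure Φ, ⇑σ '' R)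

instance lpresKernel_normal {X : Type} (Q R : Set (FreeGroup X))
    (Φ : Set (Monoid.End (FreeGroup X))) : (lpresKernel Q R Φ).Normal :=
  Subgroup.normalClosure_normal

/-- A group is finitely `L`-presented if it is isomorphic to the group presented by a
finite `L`-presentation `(X, Q, Φ, R)`. -/
def IsFinitelyLPresented (G : Type*) [Group G] : Prop :=
  ∃ (n : ℕ) (Q R : Finset (FreeGroup (Fin n)))
    (Φ : Finset (Monoid.End (FreeGroup (Fin n)))),
    Nonempty (G ≃* FreeGroup (Fin n) ⧸ lpresKernel (Q : Set _) (R : Set _) (Φ : Set _))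

/-- A group is invariantly finitely `L`-presented if it admits a finite `L`-presentation
`(X, Q, Φ, R)` such that each `σ ∈ Φ` leaves the kernel `N` invariant. -/
def IsInvariantlyFinitelyLPresented (G : Type*) [Group G] : Prop :=
  ∃ (n : ℕ) (Q R : Finset (FreeGroup (Fin n)))
    (Φ : Finset (Monoid.End (FreeGroup (Fin n)))),
    (∀ σ ∈ Φ, ∀ g ∈ lpresKernel (Q : Set _) (R : Set _) (Φ : Set _),
        σ g ∈ lpresKernel (Q : Set _) (R : Set _) (Φ : Set _)) ∧
    Nonempty (G ≃* FreeGroup (Fin n) ⧸ lpresKernel (Q : Set _) (R : Set _) (Φ : Set _))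

/-!
Write `G = F/N` with `F` free of finite rank. Invariance lets `Q` be absorbed into `R`, so that
`N` is the normal closure of the `Φ*`-orbit of `R`, and `N` is mapped into itself by `Φ` and by
all conjugations. Let `V ≤ F` be the preimage of `U`, and `W ≤ V` the intersection of the
kernels of all homomorphisms `F → Sym(F/V)` vanishing on `N`: it has finite index, contains
`N`, and is mapped into itself by every endomorphism preserving `N`. By Schreier, `V` and `W`
are free on finite sets `Y` and `Z`.

The free group `E` on `Y ⊔ Z` maps onto `V`, with kernel normally generated by the finitely
many relations writing each `z ∈ Z` as a word in `Y`. An endomorphism of `F` preserving `W`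
lifts to an endomorphism of `E` acting on the `Z`-letters. Adding the `Z`-copies of `R`,
iterated under the lifts of `Φ` and of the conjugations by a finite right transversal of `V`,
cuts out exactly the preimage of `N` in `E`; the conjugations are what turn normal closure in
`V` into normal closure in `F`. Hence `U ≅ V/N` is finitely `L`-presented.
-/

open Subgroup

def endCongr {A B : Type*} [Monoid A] [Monoid B] (c : A ≃* B) :
    Monoid.End A →* Monoid.End B where
  toFun σ := (c.toMonoidHom.comp σ).comp c.symm.toMonoidHom
  map_one' := MonoidHom.ext c.apply_symm_apply
  map_mul' σ τ := MonoidHom.ext fun x =>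
    show c (σ (τ (c.symm x))) = c (σ (c.symm (c (τ (c.symm x))))) by simp

@[simp]
lemma endCongr_apply {A B : Type*} [Monoid A] [Monoid B] (c : A ≃* B)
    (σ : Monoid.End A) (x : B) : endCongr c σ x = c (σ (c.symm x)) := rfl

lemma lpresKernel_map {A B : Type} (c : FreeGroup A ≃* FreeGroup B)
    (Q R : Set (FreeGroup A)) (Φ : Set (Monoid.End (FreeGroup A))) :
    (lpresKernel Q R Φ).map c.toMonoidHom =
      lpresKernel (c '' Q) (c '' R) (endCongr c '' Φ) := by
  rw [lpresKernel, lpresKernel, map_normalClosure _ _ c.surjective, Set.image_union,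
    ← MonoidHom.map_mclosure]
  congr 2
  ext x
  simp

lemma IsFinitelyLPresented.of_mulEquiv {H K : Type*} [Group H] [Group K] (e : H ≃* K)
    (hK : IsFinitelyLPresented K) : IsFinitelyLPresented H := by
  obtain ⟨n, Q, R, Φ, ⟨e'⟩⟩ := hK
  exact ⟨n, Q, R, Φ, ⟨e.trans e'⟩⟩

lemma IsFinitelyLPresented.of_finite {H : Type*} [Group H] {B : Type} [Finite B]
    {Q R : Set (FreeGroup B)} {Φ : Set (Monoid.End (FreeGroup B))}
    (hQ : Q.Finite) (hR : R.Finite) (hΦ : Φ.Finite)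
    (e : H ≃* FreeGroup B ⧸ lpresKernel Q R Φ) :
    IsFinitelyLPresented H := by
  classical
  let c := FreeGroup.freeGroupCongr (Finite.equivFin B)
  refine ⟨Nat.card B, (hQ.image c).toFinset, (hR.image c).toFinset,
    (hΦ.image (endCongr c)).toFinset, ⟨e.trans (QuotientGroup.congr _ _ c ?_)⟩⟩
  simpa using lpresKernel_map c Q R Φ

lemma finite_of_fg_freeGroup (ι : Type*) [Group.FG (FreeGroup ι)] : Finite ι := by
  have : Group.FG (Abelianization (FreeGroup ι)) :=
    Group.fg_of_surjective (f := Abelianization.of) (fun x => Quotient.exists_rep x)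
  have : Module.Finite ℤ (FreeAbelianGroup ι) :=
    Module.Finite.iff_addGroup_fg.mpr AddGroup.fg_of_group_fg
  exact Module.Finite.finite_basis (FreeAbelianGroup.basis ι)

lemma IsFreeGroup.finite_generators (G : Type*) [Group G] [IsFreeGroup G] [Group.FG G] :
    Finite (IsFreeGroup.Generators G) :=
  have := Group.fg_of_surjective (f := (IsFreeGroup.toFreeGroup G).toMonoidHom)
    (IsFreeGroup.toFreeGroup G).surjective
  finite_of_fg_freeGroup _

lemma finite_monoidHom_of_fg (G P : Type*) [Group G] [Group.FG G] [Group P] [Finite P] :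
    Finite (G →* P) := by
  obtain ⟨S, hS, hSfin⟩ := Group.fg_iff.mp ‹_›
  have := hSfin.to_subtype
  refine Finite.of_injective (fun f : G →* P => fun s : S => f s) fun f g hfg => ?_
  exact MonoidHom.eq_of_eqOn_dense hS fun s hs => congr_fun hfg ⟨s, hs⟩

section Conjugation

variable {F : Type*} [Group F]

def conjEnd (g : F) : Monoid.End F := (MulAut.conj g).toMonoidHom

@[simp]
lemma conjEnd_apply (g x : F) : conjEnd g x = g * x * g⁻¹ := rfl

def conjEnds (T : Set F) : Set (Monoid.End F) := conjEnd '' T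

end Conjugation

namespace Subgroup

variable {F : Type*} [Group F]

def invariantEnds (H : Subgroup F) : Submonoid (Monoid.End F) where
  carrier := {μ | ∀ h ∈ H, μ h ∈ H}
  one_mem' _ h := h
  mul_mem' hμ hν _ h := hμ _ (hν _ h)

lemma mem_invariantEnds {H : Subgroup F} {μ : Monoid.End F} :
    μ ∈ H.invariantEnds ↔ ∀ h ∈ H, μ h ∈ H := Iff.rfl

lemma Normal.conjEnd_mem_invariantEnds {H : Subgroup F} (hH : H.Normal) (g : F) :
    conjEnd g ∈ H.invariantEnds :=
  mem_invariantEnds.mpr fun h hh => hH.conj_mem h hh g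

def restrictEnd (H : Subgroup F) : H.invariantEnds →* Monoid.End H where
  toFun μ := ((μ : Monoid.End F).comp H.subtype).codRestrict H fun h => μ.2 _ h.2
  map_one' := rfl
  map_mul' _ _ := rfl

@[simp]
lemma coe_restrictEnd_apply (H : Subgroup F) (μ : H.invariantEnds) (h : H) :
    (H.restrictEnd μ h : F) = (μ : Monoid.End F) h := rfl

def kerInf (N : Subgroup F) (P : Type*) [Group P] : Subgroup F :=
  ⨅ f : {f : F →* P // N ≤ f.ker}, f.1.ker

variable (N : Subgroup F) (P : Type*) [Group P]

lemma le_kerInf : N ≤ N.kerInf P := le_iInf fun f => f.2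

lemma invariantEnds_le_invariantEnds_kerInf : N.invariantEnds ≤ (N.kerInf P).invariantEnds :=
  fun μ hμ _ hw => mem_iInf.mpr fun f =>
    mem_iInf.mp hw ⟨f.1.comp μ, fun _ hn => f.2 (hμ _ hn)⟩

instance kerInf_finiteIndex [Group.FG F] [Finite P] : (N.kerInf P).FiniteIndex :=
  have := finite_monoidHom_of_fg F P
  finiteIndex_iInf fun _ => inferInstance

lemma kerInf_perm_le [N.Normal] {V : Subgroup F} (hNV : N ≤ V) :
    N.kerInf (Equiv.Perm (F ⧸ V)) ≤ V := by
  have hN : N ≤ (MulAction.toPermHom F (F ⧸ V)).ker := by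
    rw [← normalCore_eq_ker]
    exact normal_le_normalCore.mpr hNV
  exact (iInf_le _ ⟨_, hN⟩).trans ((normalCore_eq_ker V).symm.le.trans (normalCore_le V))

lemma exists_finite_right_transversal (V : Subgroup F) [V.FiniteIndex] :
    ∃ T : Set F, T.Finite ∧ ∀ f, ∃ v ∈ V, ∃ t ∈ T, f = v * t := by
  refine ⟨Set.range fun c : F ⧸ V => c.out⁻¹, Set.finite_range _, fun f => ?_⟩
  have h : (f⁻¹ : F)⁻¹ * (QuotientGroup.mk f⁻¹ : F ⧸ V).out ∈ V :=
    QuotientGroup.eq.mp (QuotientGroup.out_eq' _).symm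
  exact ⟨_, by simpa using h, _, ⟨QuotientGroup.mk f⁻¹, rfl⟩, by group⟩

lemma normalClosure_le_of_conj_mem {V H : Subgroup F} {s T : Set F}
    (hVT : ∀ f, ∃ v ∈ V, ∃ t ∈ T, f = v * t) (hV : V ≤ normalizer (H : Set F))
    (hs : ∀ t ∈ T, ∀ g ∈ s, t * g * t⁻¹ ∈ H) : normalClosure s ≤ H := by
  refine (closure_le _).mpr fun x hx => ?_
  obtain ⟨g, hg, hconj⟩ := Group.mem_conjugatesOfSet_iff.mp hx
  obtain ⟨f, rfl⟩ := isConj_iff.mp hconj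
  obtain ⟨v, hv, t, ht, rfl⟩ := hVT f
  simpa [mul_assoc] using (mem_normalizer_iff.mp (hV hv) _).mp (hs t ht g hg)

end Subgroup

lemma Submonoid.mem_closure_preimage_subtype_iff {M : Type*} [Monoid M] {S : Submonoid M}
    {s : Set M} (hs : s ⊆ S) {x : S} :
    x ∈ closure (((↑) : S → M) ⁻¹' s) ↔ (x : M) ∈ closure s := by
  rw [← mem_map_iff_mem (f := S.subtype) Subtype.val_injective, MonoidHom.map_mclosure,
    coe_subtype, Set.image_preimage_eq_of_subset (by simpa using hs)]

namespace FreeGroup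

variable (Y : Type*) {Z : Type*}

lemma lift_sumElim_comp_map_inr (ψ : Monoid.End (FreeGroup Z)) :
    (lift (Sum.elim (fun y => of (.inl y)) fun z => map Sum.inr (ψ (of z)))).comp
      (map (Sum.inr (α := Y))) = (map Sum.inr).comp ψ := by
  apply ext_hom
  intro z
  simp
  rfl

def sumRightEnd : Monoid.End (FreeGroup Z) →* Monoid.End (FreeGroup (Y ⊕ Z)) where
  toFun ψ := lift (Sum.elim (fun y => of (.inl y)) fun z => map Sum.inr (ψ (of z)))
  map_one' := by
    change _ = MonoidHom.id _
    apply ext_hom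
    rintro (y | z) <;> simp
  map_mul' ψ₁ ψ₂ := by
    change _ = MonoidHom.comp _ _
    apply ext_hom
    rintro (y | z)
    · simp
    · simp
      exact congr($(lift_sumElim_comp_map_inr Y ψ₁) (ψ₂ (of z))).symm

lemma sumRightEnd_map_inr (ψ : Monoid.End (FreeGroup Z)) (x : FreeGroup Z) :
    sumRightEnd Y ψ (map Sum.inr x) = map Sum.inr (ψ x) :=
  congr($(lift_sumElim_comp_map_inr Y ψ) x)

end FreeGroup

def endOrbit {F : Type*} [Group F] (R : Set F) (Φ : Set (Monoid.End F)) : Set F :=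
  ⋃ μ ∈ Submonoid.closure Φ, ⇑μ '' R

lemma mem_endOrbit {F : Type*} [Group F] {R : Set F} {Φ : Set (Monoid.End F)} {x : F} :
    x ∈ endOrbit R Φ ↔ ∃ μ ∈ Submonoid.closure Φ, ∃ r ∈ R, μ r = x := by
  simp [endOrbit]

lemma subset_endOrbit {F : Type*} [Group F] (R : Set F) (Φ : Set (Monoid.End F)) :
    R ⊆ endOrbit R Φ :=
  fun r hr => mem_endOrbit.mpr ⟨1, Submonoid.one_mem _, r, hr, rfl⟩

lemma lpresKernel_eq_normalClosure_endOrbit {X : Type} {Q R : Set (FreeGroup X)}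
    {Φ : Set (Monoid.End (FreeGroup X))} (hΦ : Φ ⊆ (lpresKernel Q R Φ).invariantEnds) :
    lpresKernel Q R Φ = normalClosure (endOrbit (Q ∪ R) Φ) := by
  apply le_antisymm
  · refine normalClosure_mono (Set.union_subset ?_ ?_)
    · exact Set.subset_union_left.trans (subset_endOrbit _ Φ)
    · exact Set.biUnion_mono subset_rfl fun μ _ => Set.image_mono Set.subset_union_right
  · have hQR : Q ∪ R ⊆ lpresKernel Q R Φ := fun x hx => subset_normalClosure <|
      hx.imp id fun hr => subset_endOrbit R Φ hr
    refine normalClosure_le_normal fun x hx => ?_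
    obtain ⟨μ, hμ, r, hr, rfl⟩ := mem_endOrbit.mp hx
    exact Submonoid.closure_le.mpr hΦ hμ _ (hQR hr)

namespace FiniteIndexPresentation

variable {F : Type*} [Group F] {V W : Subgroup F} {Y Z : Type}
  (eY : FreeGroup Y ≃* V) (eZ : FreeGroup Z ≃* W)

def proj : FreeGroup (Y ⊕ Z) →* F :=
  FreeGroup.lift (Sum.elim (fun y => (eY (.of y) : F)) fun z => (eZ (.of z) : F))

lemma proj_map_inl (x : FreeGroup Y) : proj eY eZ (FreeGroup.map Sum.inl x) = eY x := by
  suffices (proj eY eZ).comp (FreeGroup.map Sum.inl) = V.subtype.comp eY.toMonoidHom from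
    congr($this x)
  apply FreeGroup.ext_hom
  simp [proj]

lemma proj_map_inr (x : FreeGroup Z) : proj eY eZ (FreeGroup.map Sum.inr x) = eZ x := by
  suffices (proj eY eZ).comp (FreeGroup.map Sum.inr) = W.subtype.comp eZ.toMonoidHom from
    congr($this x)
  apply FreeGroup.ext_hom
  simp [proj]

variable (hWV : W ≤ V)

def toYWord : FreeGroup (Y ⊕ Z) →* FreeGroup Y :=
  FreeGroup.lift (Sum.elim .of fun z => eY.symm (inclusion hWV (eZ (.of z))))

lemma proj_eq_subtype_comp :
    proj eY eZ = V.subtype.comp (eY.toMonoidHom.comp (toYWord eY eZ hWV)) := by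
  apply FreeGroup.ext_hom
  rintro (y | z) <;> simp [proj, toYWord]

lemma range_proj (hWV : W ≤ V) : (proj eY eZ).range = V := by
  apply le_antisymm
  · rw [proj_eq_subtype_comp eY eZ hWV]
    rintro _ ⟨u, rfl⟩
    exact (eY _).2
  · intro v hv
    exact ⟨_, (proj_map_inl eY eZ (eY.symm ⟨v, hv⟩)).trans (by simp)⟩

def rewriteRels : Set (FreeGroup (Y ⊕ Z)) :=
  Set.range fun z =>
    .of (.inr z) * (FreeGroup.map Sum.inl (eY.symm (inclusion hWV (eZ (.of z)))))⁻¹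

lemma ker_proj_le : (proj eY eZ).ker ≤ normalClosure (rewriteRels eY eZ hWV) := by
  set M := normalClosure (rewriteRels eY eZ hWV)
  have hM : QuotientGroup.mk' M = (QuotientGroup.mk' M).comp
      ((FreeGroup.map Sum.inl).comp (toYWord eY eZ hWV)) := by
    apply FreeGroup.ext_hom
    rintro (y | z)
    · simp [toYWord]
    · simp only [toYWord, MonoidHom.comp_apply, FreeGroup.lift_apply_of, Sum.elim_inr]
      exact QuotientGroup.eq_iff_div_mem.mpr (subset_normalClosure ⟨z, by rw [div_eq_mul_inv]⟩)
  intro u hu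
  have hu' : toYWord eY eZ hWV u = 1 := by
    rw [MonoidHom.mem_ker, proj_eq_subtype_comp eY eZ hWV] at hu
    simpa using hu
  rw [← QuotientGroup.eq_one_iff, ← QuotientGroup.mk'_apply, hM]
  simp [hu']

lemma rewriteRels_subset_ker : rewriteRels eY eZ hWV ⊆ (proj eY eZ).ker := by
  rintro _ ⟨z, rfl⟩
  simp [← FreeGroup.map.of, proj_map_inl, proj_map_inr]

variable (Y) in
def liftEnd : W.invariantEnds →* Monoid.End (FreeGroup (Y ⊕ Z)) :=
  (FreeGroup.sumRightEnd Y).comp ((endCongr eZ.symm).comp W.restrictEnd)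

lemma proj_liftEnd_map_inr (μ : W.invariantEnds) (x : FreeGroup Z) :
    proj eY eZ (liftEnd Y eZ μ (FreeGroup.map Sum.inr x)) = (μ : Monoid.End F) (eZ x) := by
  simp [liftEnd, FreeGroup.sumRightEnd_map_inr, proj_map_inr]

variable (Y) in
def liftRels (R : Set F) : Set (FreeGroup (Y ⊕ Z)) :=
  FreeGroup.map Sum.inr '' {x | (eZ x : F) ∈ R}

variable (Y) in
def liftEnds (Ψ : Set (Monoid.End F)) : Set (Monoid.End (FreeGroup (Y ⊕ Z))) :=
  liftEnd Y eZ '' ((↑) ⁻¹' Ψ)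

lemma rewriteRels_finite [Finite Z] : (rewriteRels eY eZ hWV).Finite := Set.finite_range _

lemma liftRels_finite {R : Set F} (hR : R.Finite) : (liftRels Y eZ R).Finite :=
  (hR.preimage (Subtype.val_injective.comp eZ.injective).injOn).image _

lemma liftEnds_finite {Ψ : Set (Monoid.End F)} (hΨ : Ψ.Finite) : (liftEnds Y eZ Ψ).Finite :=
  (hΨ.preimage Subtype.val_injective.injOn).image _

lemma lpresKernel_le_comap_proj {N : Subgroup F} [N.Normal] {R : Set F}
    {Ψ : Set (Monoid.End F)} (hRN : R ⊆ N) (hΨ : Ψ ⊆ N.invariantEnds) :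
    lpresKernel (rewriteRels eY eZ hWV) (liftRels Y eZ R) (liftEnds Y eZ Ψ)
      ≤ N.comap (proj eY eZ) := by
  refine normalClosure_le_normal (Set.union_subset ?_ fun u hu => ?_)
  · exact (rewriteRels_subset_ker eY eZ hWV).trans (MonoidHom.ker_le_comap _ N)
  obtain ⟨μ', hμ', _, ⟨x, hx, rfl⟩, rfl⟩ := mem_endOrbit.mp hu
  obtain ⟨μ, hμ, rfl⟩ :
      ∃ μ ∈ Submonoid.closure (((↑) : W.invariantEnds → Monoid.End F) ⁻¹' Ψ),
        liftEnd Y eZ μ = μ' := by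
    rwa [liftEnds, ← MonoidHom.map_mclosure] at hμ'
  have hμN : (μ : Monoid.End F) ∈ N.invariantEnds :=
    Submonoid.closure_le.mpr hΨ (MonoidHom.mclosure_preimage_le W.invariantEnds.subtype Ψ hμ)
  show proj eY eZ (liftEnd Y eZ μ (FreeGroup.map Sum.inr x)) ∈ N
  rw [proj_liftEnd_map_inr]
  exact hμN _ (hRN hx)

lemma normalClosure_endOrbit_le_map {R : Set F} {Φ : Set (Monoid.End F)} {T : Set F}
    (hRW : R ⊆ W) (hΨ : Φ ∪ conjEnds T ⊆ W.invariantEnds)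
    (hT : ∀ f, ∃ v ∈ V, ∃ t ∈ T, f = v * t) :
    normalClosure (endOrbit R Φ) ≤ (lpresKernel (rewriteRels eY eZ hWV) (liftRels Y eZ R)
      (liftEnds Y eZ (Φ ∪ conjEnds T))).map (proj eY eZ) := by
  refine normalClosure_le_of_conj_mem hT ?_ fun t ht g hg => ?_
  · have := le_normalizer_map (H := lpresKernel (rewriteRels eY eZ hWV) (liftRels Y eZ R)
      (liftEnds Y eZ (Φ ∪ conjEnds T))) (proj eY eZ)
    rwa [normalizer_eq_top, ← MonoidHom.range_eq_map, range_proj eY eZ hWV] at this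
  obtain ⟨μ, hμ, r, hr, rfl⟩ := mem_endOrbit.mp hg
  have hν : conjEnd t * μ ∈ Submonoid.closure (Φ ∪ conjEnds T) :=
    mul_mem (Submonoid.subset_closure (Or.inr ⟨t, ht, rfl⟩))
      (Submonoid.closure_mono Set.subset_union_left hμ)
  set ν : W.invariantEnds := ⟨_, Submonoid.closure_le.mpr hΨ hν⟩
  have hν' : ν ∈ Submonoid.closure ((↑) ⁻¹' (Φ ∪ conjEnds T)) :=
    (Submonoid.mem_closure_preimage_subtype_iff hΨ).mpr hν
  refine ⟨liftEnd Y eZ ν (FreeGroup.map Sum.inr (eZ.symm ⟨r, hRW hr⟩)),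
    subset_normalClosure (Or.inr (mem_endOrbit.mpr ⟨_, ?_, _, ⟨_, ?_, rfl⟩, rfl⟩)), ?_⟩
  · rw [liftEnds, ← MonoidHom.map_mclosure]
    exact Submonoid.mem_map_of_mem _ hν'
  · simpa using hr
  · rw [proj_liftEnd_map_inr]
    simp [ν]

theorem comap_proj_eq_lpresKernel {N : Subgroup F} {R : Set F} {Φ : Set (Monoid.End F)}
    {T : Set F} (hN : N = normalClosure (endOrbit R Φ)) (hΦ : Φ ⊆ N.invariantEnds)
    (hNW : N ≤ W) (hW : N.invariantEnds ≤ W.invariantEnds)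
    (hT : ∀ f, ∃ v ∈ V, ∃ t ∈ T, f = v * t) :
    N.comap (proj eY eZ) = lpresKernel (rewriteRels eY eZ hWV) (liftRels Y eZ R)
      (liftEnds Y eZ (Φ ∪ conjEnds T)) := by
  have : N.Normal := hN ▸ normalClosure_normal
  have hRN : R ⊆ N := hN ▸ (subset_endOrbit R Φ).trans subset_normalClosure
  have hΨ : Φ ∪ conjEnds T ⊆ N.invariantEnds := by
    refine Set.union_subset hΦ ?_
    rintro _ ⟨t, -, rfl⟩
    exact Normal.conjEnd_mem_invariantEnds ‹_› t
  refine le_antisymm (fun u hu => ?_) (lpresKernel_le_comap_proj eY eZ hWV hRN hΨ)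
  obtain ⟨l, hl, hlu⟩ := (hN ▸ normalClosure_endOrbit_le_map eY eZ hWV (hRN.trans hNW)
    (hΨ.trans hW) hT) hu
  have hker : l⁻¹ * u ∈ (proj eY eZ).ker := by simp [hlu]
  simpa using
    mul_mem hl (normalClosure_mono Set.subset_union_left (ker_proj_le eY eZ hWV hker))

end FiniteIndexPresentation

open FiniteIndexPresentation in
theorem IsFinitelyLPresented.of_finiteIndex {X : Type} [Finite X] {R : Set (FreeGroup X)}
    {Φ : Set (Monoid.End (FreeGroup X))} (hR : R.Finite) (hΦfin : Φ.Finite)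
    (hΦ : Φ ⊆ (normalClosure (endOrbit R Φ)).invariantEnds)
    (U : Subgroup (FreeGroup X ⧸ normalClosure (endOrbit R Φ))) (hU : U.FiniteIndex) :
    IsFinitelyLPresented U := by
  set N := normalClosure (endOrbit R Φ)
  set V := U.comap (QuotientGroup.mk' N)
  have : V.FiniteIndex := ⟨by
    rw [index_comap_of_surjective _ (QuotientGroup.mk'_surjective N)]
    exact hU.index_ne_zero⟩
  have hNV : N ≤ V := by
    simpa [V] using MonoidHom.ker_le_comap (QuotientGroup.mk' N) U
  set W := N.kerInf (Equiv.Perm (FreeGroup X ⧸ V))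
  obtain ⟨T, hTfin, hT⟩ := V.exists_finite_right_transversal
  have := IsFreeGroup.finite_generators V
  have := IsFreeGroup.finite_generators W
  set eY := (IsFreeGroup.toFreeGroup V).symm
  set eZ := (IsFreeGroup.toFreeGroup W).symm
  have hWV : W ≤ V := kerInf_perm_le N hNV
  have hK := comap_proj_eq_lpresKernel eY eZ hWV rfl hΦ (le_kerInf N _)
    (invariantEnds_le_invariantEnds_kerInf N _) hT
  set π := (QuotientGroup.mk' N).comp (proj eY eZ)
  have hrange : π.range = U := by
    rw [MonoidHom.range_comp, range_proj eY eZ hWV,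
      map_comap_eq_self_of_surjective (QuotientGroup.mk'_surjective N)]
  have hker : π.ker = N.comap (proj eY eZ) := by
    rw [← MonoidHom.comap_ker, QuotientGroup.ker_mk']
  refine IsFinitelyLPresented.of_finite (rewriteRels_finite eY eZ hWV) (liftRels_finite eZ hR)
    (liftEnds_finite eZ (hΦfin.union (hTfin.image conjEnd))) ?_
  exact (MulEquiv.subgroupCongr hrange.symm).trans <|
    (QuotientGroup.quotientKerEquivRange π).symm.trans
      (QuotientGroup.quotientMulEquivOfEq (hker.trans hK))

/-- Proposition 6.3: every subgroup of finite index in an invariantly finitely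
`L`-presented group is finitely `L`-presented. -/
theorem finiteIndex_subgroup_of_invariantly_isFinitelyLPresented
    {G : Type*} [Group G] (hG : IsInvariantlyFinitelyLPresented G)
    (U : Subgroup G) (hU : U.FiniteIndex) :
    IsFinitelyLPresented U := by
  obtain ⟨n, Q, R, Φ, hinv, ⟨e⟩⟩ := hG
  have hΦ : (Φ : Set (Monoid.End (FreeGroup (Fin n)))) ⊆
      (lpresKernel (Q : Set (FreeGroup (Fin n))) R Φ).invariantEnds :=
    fun σ hσ => mem_invariantEnds.mpr (hinv σ hσ)
  have hN := lpresKernel_eq_normalClosure_endOrbit hΦ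
  let e' := e.trans (QuotientGroup.quotientMulEquivOfEq hN)
  refine (IsFinitelyLPresented.of_finiteIndex (Q.finite_toSet.union R.finite_toSet)
    Φ.finite_toSet (hN ▸ hΦ) _ ⟨?_⟩).of_mulEquiv (e'.subgroupMap U)
  rw [index_map_equiv]
  exact hU.index_ne_zero
end

section
/- Let F be a free group of finite rank, H ≤ F a subgroup of finite index, Φ a finite set of endomorphisms of F, Φ* the submonoid of End(F) generated by Φ, and L̃ = ⋂_{σ∈Φ*} σ⁻¹(H) the stabilizing subgroup of H. Then: (i) L̃ ⊆ H; (ii) ψ(L̃) ⊆ L̃ for every ψ ∈ Φ; (iii) L̃ has finite index in F; and (iv) L̃ is the largest Φ*-invariant subgroup of H, i.e., every subgroup N ≤ H with σ(N) ⊆ N for all σ ∈ Φ* is contained in L̃. -/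
/-!
Parts (i), (ii) and (iv) are formal consequences of `1 ∈ Φ*` and `Φ* Φ ⊆ Φ*`. For (iii), the
permutation representation `φ : F → Sym(H\F)` has kernel `Core_F(H) ≤ H`, so every `σ⁻¹(H)`
contains `ker (φ ∘ σ)`. As `F` is finitely generated and `Sym(H\F)` is finite, there are only
finitely many homomorphisms `F → Sym(H\F)`, and the intersection of their kernels is a
finite-index subgroup contained in `L̃`.
-/

open Subgroup

instance MonoidHom.finite_of_fg {G Q : Type*} [Group G] [Group.FG G] [Monoid Q] [Finite Q] :
    Finite (G →* Q) := by
  obtain ⟨S, hS, hSfin⟩ := Group.fg_iff.mp ‹Group.FG G›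
  have : Finite S := hSfin.to_subtype
  refine .of_injective (fun f : G →* Q => fun s : S => f s) fun f g hfg => ?_
  exact MonoidHom.eq_of_eqOn_dense hS fun s hs => congrFun hfg ⟨s, hs⟩

namespace Subgroup

variable {G G' : Type*} [Group G] [Group G']

theorem finiteIndex_iInf_ker [Group.FG G] (Q : Type*) [Group Q] [Finite Q] :
    (⨅ ψ : G →* Q, ψ.ker).FiniteIndex :=
  finiteIndex_iInf fun ψ => finiteIndex_ker ψ

theorem iInf_ker_le_comap (H : Subgroup G') (f : G →* G') :
    ⨅ ψ : G →* Equiv.Perm (G' ⧸ H), ψ.ker ≤ H.comap f :=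
  calc ⨅ ψ : G →* Equiv.Perm (G' ⧸ H), ψ.ker
      ≤ ((MulAction.toPermHom G' (G' ⧸ H)).comp f).ker := iInf_le _ _
    _ = H.normalCore.comap f := by rw [← MonoidHom.comap_ker, normalCore_eq_ker]
    _ ≤ H.comap f := comap_mono H.normalCore_le

theorem finiteIndex_iInf_comap [Group.FG G] (H : Subgroup G') [H.FiniteIndex] {ι : Type*}
    (f : ι → G →* G') : (⨅ i, H.comap (f i)).FiniteIndex :=
  have := H.finite_quotient_of_finiteIndex
  have := finiteIndex_iInf_ker (G := G) (Equiv.Perm (G' ⧸ H))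
  finiteIndex_of_le (le_iInf fun i => iInf_ker_le_comap H (f i))

end Subgroup

section StabilizingSubgroup

variable {G : Type*} [Group G] (S : Submonoid (Monoid.End G)) (H : Subgroup G)

def stabilizingSubgroup : Subgroup G :=
  ⨅ σ ∈ S, H.comap (σ : G →* G)

variable {S H}

theorem mem_stabilizingSubgroup {g : G} : g ∈ stabilizingSubgroup S H ↔ ∀ σ ∈ S, σ g ∈ H := by
  simp only [stabilizingSubgroup, mem_iInf]
  rfl

theorem stabilizingSubgroup_le : stabilizingSubgroup S H ≤ H := fun _ hg =>
  mem_stabilizingSubgroup.mp hg 1 S.one_mem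

theorem map_mem_stabilizingSubgroup {ψ : Monoid.End G} (hψ : ψ ∈ S) {g : G}
    (hg : g ∈ stabilizingSubgroup S H) : ψ g ∈ stabilizingSubgroup S H :=
  mem_stabilizingSubgroup.mpr fun σ hσ => mem_stabilizingSubgroup.mp hg (σ * ψ) (S.mul_mem hσ hψ)

theorem le_stabilizingSubgroup {N : Subgroup G} (hNH : N ≤ H) (hN : ∀ σ ∈ S, ∀ g ∈ N, σ g ∈ N) :
    N ≤ stabilizingSubgroup S H := fun g hg =>
  mem_stabilizingSubgroup.mpr fun σ hσ => hNH (hN σ hσ g hg)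

instance [Group.FG G] [H.FiniteIndex] : (stabilizingSubgroup S H).FiniteIndex := by
  rw [stabilizingSubgroup, iInf_subtype']
  exact finiteIndex_iInf_comap H _

end StabilizingSubgroup

/-- Proposition 5.9 about the stabilizing subgroup `L̃ = ⋂_{σ∈Φ*} σ⁻¹(H)` of a finite
index subgroup `H` of a free group `F` of finite rank: (i) `L̃ ⊆ H`; (ii) `L̃` is
`Φ`-invariant; (iii) `L̃` has finite index in `F`; (iv) `L̃` is the largest
`Φ*`-invariant subgroup of `H`. -/
theorem stabilizingSubgroup_spec
    (n : ℕ) (H : Subgroup (FreeGroup (Fin n))) (hHfi : H.FiniteIndex)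
    (Φ : Finset (Monoid.End (FreeGroup (Fin n))))
    (L : Subgroup (FreeGroup (Fin n)))
    (hL : L = ⨅ σ ∈ Submonoid.closure (Φ : Set (Monoid.End (FreeGroup (Fin n)))),
      H.comap (σ : FreeGroup (Fin n) →* FreeGroup (Fin n))) :
    L ≤ H ∧
    (∀ ψ ∈ Φ, ∀ g ∈ L, ψ g ∈ L) ∧
    L.FiniteIndex ∧
    (∀ N : Subgroup (FreeGroup (Fin n)), N ≤ H →
      (∀ σ ∈ Submonoid.closure (Φ : Set (Monoid.End (FreeGroup (Fin n)))),
        ∀ g ∈ N, σ g ∈ N) → N ≤ L) := by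
  change L = stabilizingSubgroup _ H at hL
  subst hL
  exact ⟨stabilizingSubgroup_le,
    fun ψ hψ _ => map_mem_stabilizingSubgroup (Submonoid.subset_closure hψ),
    inferInstance, fun _ => le_stabilizingSubgroup⟩
end

section
/- Let F be a free group of finite rank, H ≤ F of finite index, Φ a finite set of endomorphisms of F with generated submonoid Φ*, φ : F → Sym(H\F) the permutation representation on the right cosets of H, L̃ = ⋂_{σ∈Φ*} σ⁻¹(H) the stabilizing subgroup, and L = ⋂_{σ∈Φ*} ker(φ∘σ) the stabilizing core. Then L̃ = L if and only if L̃ ⊆ Core_F(H). -/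
/-!
An element `x` lies in `L̃` iff `σ x ∈ H` for all `σ ∈ Φ*`; since `Φ*` is closed under composition,
`L̃` is mapped into itself by every `σ ∈ Φ*`. The kernel of `φ` is `Core_F(H)`, so
`L = ⋂_{σ∈Φ*} σ⁻¹(Core_F(H))`. Hence `L ⊆ L̃ ⊆ H` always, and if `L̃ ⊆ Core_F(H)` then
`σ(L̃) ⊆ L̃ ⊆ Core_F(H)` for every `σ ∈ Φ*`, i.e. `L̃ ⊆ L`.
-/

/-- The permutation representation of a group `F` on the right cosets `H\F` of a
subgroup `H`, induced by right multiplication.  (With Mathlib's convention that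
permutations compose right-to-left, the element `g` acts on a right coset `Hx`
as `Hx ↦ Hxg⁻¹`, which makes `g ↦ (Hx ↦ Hxg)` into a monoid homomorphism when
read in the usual left-to-right convention for permutation actions.) -/
def rightCosetRep {F : Type*} [Group F] (H : Subgroup F) :
    F →* Equiv.Perm (Quotient (QuotientGroup.rightRel H)) where
  toFun g :=
    { toFun := Quotient.map' (· * g⁻¹) fun a b hab => by
        rw [QuotientGroup.rightRel_apply] at hab ⊢
        simpa [mul_assoc] using hab
      invFun := Quotient.map' (· * g) fun a b hab => by
        rw [QuotientGroup.rightRel_apply] at hab ⊢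
        simpa [mul_assoc] using hab
      left_inv := fun q => Quotient.inductionOn' q fun a => by
        simp [Quotient.map'_mk'', mul_assoc]
      right_inv := fun q => Quotient.inductionOn' q fun a => by
        simp [Quotient.map'_mk'', mul_assoc] }
  map_one' := by
    ext q
    exact Quotient.inductionOn' q fun a => by simp [Quotient.map'_mk'']
  map_mul' x y := by
    ext q
    exact Quotient.inductionOn' q fun a => by simp [Quotient.map'_mk'', mul_assoc]

section RightCosetRep

variable {F : Type*} [Group F] (H : Subgroup F)

theorem rightCosetRep_mk (g b : F) :
    rightCosetRep H g (Quotient.mk'' b) = Quotient.mk'' (b * g⁻¹) :=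
  rfl

theorem ker_rightCosetRep : (rightCosetRep H).ker = H.normalCore := by
  ext g
  simp only [MonoidHom.mem_ker, Equiv.ext_iff, Equiv.Perm.coe_one, id_eq]
  refine ⟨fun h b => ?_, fun h q => Quotient.inductionOn' q fun b => ?_⟩
  · have hb := h (Quotient.mk'' b)
    rw [rightCosetRep_mk, Quotient.eq'', QuotientGroup.rightRel_apply] at hb
    simpa [mul_assoc] using hb
  · rw [rightCosetRep_mk, Quotient.eq'', QuotientGroup.rightRel_apply]
    simpa [mul_assoc] using h b

end RightCosetRep

namespace Subgroup

variable {G : Type*} [Group G] (M : Submonoid (Monoid.End G))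

/-- `⋂_{σ ∈ M} σ⁻¹(H)`; for `M = Φ*` this is the stabilizing subgroup `L̃` of `H`. -/
def stabilizing (H : Subgroup G) : Subgroup G :=
  ⨅ σ ∈ M, H.comap (σ : G →* G)

variable {M} {H K : Subgroup G}

theorem mem_stabilizing {x : G} : x ∈ stabilizing M H ↔ ∀ σ ∈ M, σ x ∈ H := by
  simp only [stabilizing, mem_iInf]
  rfl

theorem stabilizing_le_self : stabilizing M H ≤ H :=
  fun _ hx => mem_stabilizing.mp hx 1 M.one_mem

theorem stabilizing_mono (hKH : K ≤ H) : stabilizing M K ≤ stabilizing M H :=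
  fun _ hx => mem_stabilizing.mpr fun σ hσ => hKH (mem_stabilizing.mp hx σ hσ)

theorem map_mem_stabilizing {x : G} (hx : x ∈ stabilizing M H) {σ : Monoid.End G}
    (hσ : σ ∈ M) : σ x ∈ stabilizing M H :=
  mem_stabilizing.mpr fun τ hτ => mem_stabilizing.mp hx (τ * σ) (M.mul_mem hτ hσ)

theorem stabilizing_le_stabilizing_iff :
    stabilizing M H ≤ stabilizing M K ↔ stabilizing M H ≤ K :=
  ⟨fun h => h.trans stabilizing_le_self,
    fun h _ hx => mem_stabilizing.mpr fun _ hσ => h (map_mem_stabilizing hx hσ)⟩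

theorem stabilizing_eq_stabilizing_iff (hKH : K ≤ H) :
    stabilizing M H = stabilizing M K ↔ stabilizing M H ≤ K := by
  rw [← stabilizing_le_stabilizing_iff]
  exact ⟨le_of_eq, fun h => le_antisymm h (stabilizing_mono hKH)⟩

end Subgroup

theorem stabilizingSubgroup_eq_core_iff_general
    (n : ℕ) (H : Subgroup (FreeGroup (Fin n)))
    (Φ : Finset (Monoid.End (FreeGroup (Fin n))))
    (φ : FreeGroup (Fin n) →* Equiv.Perm (Quotient (QuotientGroup.rightRel H)))
    (hφ : φ = rightCosetRep H)
    (Lt : Subgroup (FreeGroup (Fin n)))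
    (hLt : Lt = ⨅ σ ∈ Submonoid.closure (Φ : Set (Monoid.End (FreeGroup (Fin n)))),
      H.comap (σ : FreeGroup (Fin n) →* FreeGroup (Fin n)))
    (L : Subgroup (FreeGroup (Fin n)))
    (hL : L = ⨅ σ ∈ Submonoid.closure (Φ : Set (Monoid.End (FreeGroup (Fin n)))),
      (φ.comp (σ : FreeGroup (Fin n) →* FreeGroup (Fin n))).ker) :
    Lt = L ↔ Lt ≤ H.normalCore := by
  have hL' : L = Subgroup.stabilizing (Submonoid.closure (Φ : Set _)) H.normalCore := by
    rw [hL, hφ, Subgroup.stabilizing, ← ker_rightCosetRep]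
    rfl
  rw [hL', hLt]
  exact Subgroup.stabilizing_eq_stabilizing_iff H.normalCore_le

/-- Lemma 5.17: the stabilizing subgroup `L̃ = ⋂_{σ∈Φ*} σ⁻¹(H)` equals the stabilizing
core `L = ⋂_{σ∈Φ*} ker(φ∘σ)` if and only if `L̃ ⊆ Core_F(H)`. -/
theorem stabilizingSubgroup_eq_core_iff
    (n : ℕ) (H : Subgroup (FreeGroup (Fin n))) (hHfi : H.FiniteIndex)
    (Φ : Finset (Monoid.End (FreeGroup (Fin n))))
    (φ : FreeGroup (Fin n) →* Equiv.Perm (Quotient (QuotientGroup.rightRel H)))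
    (hφ : φ = rightCosetRep H)
    (Lt : Subgroup (FreeGroup (Fin n)))
    (hLt : Lt = ⨅ σ ∈ Submonoid.closure (Φ : Set (Monoid.End (FreeGroup (Fin n)))),
      H.comap (σ : FreeGroup (Fin n) →* FreeGroup (Fin n)))
    (L : Subgroup (FreeGroup (Fin n)))
    (hL : L = ⨅ σ ∈ Submonoid.closure (Φ : Set (Monoid.End (FreeGroup (Fin n)))),
      (φ.comp (σ : FreeGroup (Fin n) →* FreeGroup (Fin n))).ker) :
    Lt = L ↔ Lt ≤ H.normalCore :=
  stabilizingSubgroup_eq_core_iff_general n H Φ φ hφ Lt hLt L hL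
end

section
/- Let F be a free group of finite rank, H ≤ F a subgroup of finite index, φ : F → Sym(H\F) the permutation representation of F on the right cosets of H, and σ an endomorphism of F. If k > 0 is the minimal positive integer with φ∘σ^k = φ, then there exists a minimal positive integer ℓ with σ^ℓ ⤳_φ id, and this ℓ divides k. -/
/-- `σ ⤳_φ δ`: there is a group homomorphism `π` from the image of `φ ∘ δ` to the
codomain of `φ` such that `φ ∘ σ = π ∘ (φ ∘ δ)`. -/
def leadsTo {F S : Type*} [Group F] [Group S] (φ : F →* S)
    (σ δ : Monoid.End F) : Prop :=
  ∃ π : (φ.comp (δ : F →* F)).range →* S,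
    ∀ g : F, φ (σ g) = π ⟨φ (δ g), ⟨g, rfl⟩⟩

/-! `σ ⤳_φ id` says exactly that `σ` maps `ker φ` into itself. Hence the exponents `j` with
`σ^j ⤳_φ id` form an additive submonoid of `ℕ`; since this condition only depends on `φ ∘ σ^j`,
the submonoid is invariant under shifts by `k`. If `ℓ` is its least positive element, then
`k % ℓ + (ℓ - 1) k = (k - k / ℓ) ℓ` lies in it, hence so does `k % ℓ < ℓ`, which forces
`k % ℓ = 0`. -/

namespace AddSubmonoid

variable {M : AddSubmonoid ℕ} {k : ℕ}

theorem mem_of_add_mul_mem (hper : ∀ j, j + k ∈ M → j ∈ M) {j : ℕ} :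
    ∀ m : ℕ, j + m * k ∈ M → j ∈ M
  | 0, h => by simpa using h
  | m + 1, h => mem_of_add_mul_mem hper m (hper _ (by rwa [add_assoc, ← Nat.succ_mul]))

theorem dvd_of_forall_pos_mem_le (hper : ∀ j, j + k ∈ M → j ∈ M) {ℓ : ℕ} (hℓ : 0 < ℓ)
    (hℓM : ℓ ∈ M) (hmin : ∀ j, 0 < j → j ∈ M → ℓ ≤ j) : ℓ ∣ k := by
  by_contra hndvd
  have hr : 0 < k % ℓ := Nat.pos_of_ne_zero (mt Nat.dvd_of_mod_eq_zero hndvd)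
  have hmul : k % ℓ + (ℓ - 1) * k = (k - k / ℓ) * ℓ := by
    have hdiv := Nat.div_add_mod k ℓ
    have hq : k / ℓ ≤ k := Nat.div_le_self k ℓ
    zify [hq, hℓ] at hdiv ⊢
    linear_combination hdiv
  have hrM : k % ℓ ∈ M :=
    mem_of_add_mul_mem hper (ℓ - 1) (hmul ▸ (smul_eq_mul (k - k / ℓ) ℓ ▸ nsmul_mem hℓM _))
  exact (Nat.mod_lt k hℓ).not_ge (hmin _ hr hrM)

theorem exists_least_pos_mem_dvd (hk : 0 < k) (hkM : k ∈ M)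
    (hper : ∀ j, j + k ∈ M → j ∈ M) :
    ∃ ℓ, 0 < ℓ ∧ ℓ ∈ M ∧ (∀ j, 0 < j → j ∈ M → ℓ ≤ j) ∧ ℓ ∣ k := by
  classical
  have hex : ∃ j, 0 < j ∧ j ∈ M := ⟨k, hk, hkM⟩
  obtain ⟨hℓ, hℓM⟩ := Nat.find_spec hex
  have hmin : ∀ j, 0 < j → j ∈ M → Nat.find hex ≤ j :=
    fun j hj hjM => Nat.find_min' hex ⟨hj, hjM⟩
  exact ⟨Nat.find hex, hℓ, hℓM, hmin, dvd_of_forall_pos_mem_le hper hℓ hℓM hmin⟩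

end AddSubmonoid

section

variable {F S : Type*} [Group F] [Group S] {φ : F →* S} {σ τ : Monoid.End F}

theorem leadsTo_one_iff :
    leadsTo φ σ 1 ↔ ∀ g, φ g = 1 → φ (σ g) = 1 := by
  constructor
  · rintro ⟨π, hπ⟩ g hg
    rw [hπ g, ← π.map_one]
    exact congrArg π (Subtype.ext hg)
  · intro h
    set ψ := φ.comp ((1 : Monoid.End F) : F →* F)
    refine ⟨ψ.rangeRestrict.liftOfSurjective ψ.rangeRestrict_surjective
      ⟨φ.comp (σ : F →* F), fun g hg => h g ?_⟩, fun g => ?_⟩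
    · rwa [MonoidHom.ker_rangeRestrict] at hg
    · exact (ψ.rangeRestrict.liftOfRightInverse_comp_apply _ _ ⟨φ.comp (σ : F →* F), _⟩ g).symm

theorem leadsTo_one_one : leadsTo φ 1 1 :=
  leadsTo_one_iff.2 fun _ => id

theorem leadsTo_one_of_comp_eq (h : φ.comp (σ : F →* F) = φ) :
    leadsTo φ σ 1 :=
  leadsTo_one_iff.2 fun g hg => (DFunLike.congr_fun h g).trans hg

theorem leadsTo_one_mul (hσ : leadsTo φ σ 1) (hτ : leadsTo φ τ 1) :
    leadsTo φ (σ * τ) 1 :=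
  leadsTo_one_iff.2 fun g hg => leadsTo_one_iff.1 hσ _ (leadsTo_one_iff.1 hτ g hg)

theorem leadsTo_one_mul_iff_of_comp_eq (hσ : φ.comp (σ : F →* F) = φ) :
    leadsTo φ (σ * τ) 1 ↔ leadsTo φ τ 1 := by
  have hσ' : ∀ g, φ (σ g) = φ g := DFunLike.congr_fun hσ
  simp only [leadsTo_one_iff, Monoid.End.coe_mul, Function.comp_apply, hσ']

def leadsToOneExponents (φ : F →* S) (σ : Monoid.End F) : AddSubmonoid ℕ where
  carrier := {j | leadsTo φ (σ ^ j) 1}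
  zero_mem' := (pow_zero σ).symm ▸ leadsTo_one_one
  add_mem' {a b} ha hb := by
    change leadsTo φ (σ ^ (a + b)) 1
    rw [pow_add]
    exact leadsTo_one_mul ha hb

theorem add_mem_leadsToOneExponents_iff {k : ℕ}
    (hφk : φ.comp ((σ ^ k : Monoid.End F) : F →* F) = φ) (j : ℕ) :
    j + k ∈ leadsToOneExponents φ σ ↔ j ∈ leadsToOneExponents φ σ := by
  show leadsTo φ (σ ^ (j + k)) 1 ↔ leadsTo φ (σ ^ j) 1
  rw [add_comm, pow_add]
  exact leadsTo_one_mul_iff_of_comp_eq hφk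

end

theorem minimal_leadsTo_exponent_dvd_general
    (n : ℕ) (H : Subgroup (FreeGroup (Fin n)))
    (φ : FreeGroup (Fin n) →* Equiv.Perm (Quotient (QuotientGroup.rightRel H)))
    (σ : Monoid.End (FreeGroup (Fin n))) (k : ℕ) (hk : 0 < k)
    (hφk : φ.comp ((σ ^ k : Monoid.End (FreeGroup (Fin n))) :
      FreeGroup (Fin n) →* FreeGroup (Fin n)) = φ) :
    ∃ ℓ : ℕ, 0 < ℓ ∧ leadsTo φ (σ ^ ℓ) (1 : Monoid.End (FreeGroup (Fin n))) ∧
      (∀ j : ℕ, 0 < j → leadsTo φ (σ ^ j) (1 : Monoid.End (FreeGroup (Fin n))) → ℓ ≤ j) ∧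
      ℓ ∣ k :=
  AddSubmonoid.exists_least_pos_mem_dvd (M := leadsToOneExponents φ σ) hk
    (leadsTo_one_of_comp_eq hφk) fun j => (add_mem_leadsToOneExponents_iff hφk j).1

/-- Lemma 5.13(iii): let `H` be a finite index subgroup of a free group `F` of finite
rank with permutation representation `φ` on the right cosets of `H`, and let `σ` be an
endomorphism of `F`.  If `k > 0` is the minimal positive integer with `φ∘σ^k = φ`,
then there is a minimal positive integer `ℓ` with `σ^ℓ ⤳_φ id`, and `ℓ` divides `k`. -/
theorem minimal_leadsTo_exponent_dvd
    (n : ℕ) (H : Subgroup (FreeGroup (Fin n))) (hHfi : H.FiniteIndex)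
    (φ : FreeGroup (Fin n) →* Equiv.Perm (Quotient (QuotientGroup.rightRel H)))
    (hφ : φ = rightCosetRep H)
    (σ : Monoid.End (FreeGroup (Fin n))) (k : ℕ) (hk : 0 < k)
    (hφk : φ.comp ((σ ^ k : Monoid.End (FreeGroup (Fin n))) :
      FreeGroup (Fin n) →* FreeGroup (Fin n)) = φ)
    (hkmin : ∀ j : ℕ, 0 < j →
      φ.comp ((σ ^ j : Monoid.End (FreeGroup (Fin n))) :
        FreeGroup (Fin n) →* FreeGroup (Fin n)) = φ → k ≤ j) :
    ∃ ℓ : ℕ, 0 < ℓ ∧ leadsTo φ (σ ^ ℓ) (1 : Monoid.End (FreeGroup (Fin n))) ∧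
      (∀ j : ℕ, 0 < j → leadsTo φ (σ ^ j) (1 : Monoid.End (FreeGroup (Fin n))) → ℓ ≤ j) ∧
      ℓ ∣ k :=
  minimal_leadsTo_exponent_dvd_general n H φ σ k hk hφk
end
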